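/- arXiv:1212.1519 — 5 statements merged into one kernel-verified Lean document; each statement's English description precedes it below -/
import Mathlib

section
/- Fix n ∈ ℕ. Consider the duplicate-free lists of natural numbers of length n whose set of entries is exactly {1, …, n} (i.e. the sequences (σ(1), …, σ(n)) for permutations σ of {1, …, n}). The number of isotopy equivalence classes of such lists equals the n-th Catalan number C_n = binom(2n, n)/(n+1). -/
/-- An elementary move on a duplicate-free list of natural numbers: transpose two
adjacent entries `x = i_j` and `y = i_{j+1}` for which there exists a later entry
`p = i_q` (with `q > j+1`) such that `x < p < y` or `x > p > y`. -/
def ElemMove (l l' : List ℕ) : Prop :=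
  l.Nodup ∧ ∃ (a b : List ℕ) (x y : ℕ),
    l = a ++ x :: y :: b ∧ l' = a ++ y :: x :: b ∧
    ∃ p ∈ b, (x < p ∧ p < y) ∨ (y < p ∧ p < x)

/-- Isotopy equivalence: the smallest equivalence relation generated by elementary moves. -/
def IsoEquiv : List ℕ → List ℕ → Prop := Relation.EqvGen ElemMove

/-- The set of duplicate-free lists of natural numbers of length `n` whose set of
entries is exactly `{1, …, n}` (i.e. permutations of `{1, …, n}` written as sequences). -/
def PermList (n : ℕ) : Set (List ℕ) :=
  {l | l.length = n ∧ l.Nodup ∧ ∀ x, x ∈ l ↔ x ∈ Finset.Icc 1 n}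

/-!
Insert the entries of a list, from right to left, into a binary search tree. An elementary move
swaps two consecutive insertions `x`, `y` at a moment when a key strictly between them is already
in the tree; their search paths part there, so the tree does not change. Conversely, by moves one
can bring each new entry into its place in the postorder of the tree, so every list is equivalent
to the postorder of its tree. Hence classes of permutations of `{1, …, n}` correspond to search
trees with keys `{1, …, n}`, which are determined by their shape: binary trees with `n` nodes,
counted by `C_n`.
-/

namespace BinaryTree

variable {α β : Type*}

@[simp]
def inorder : BinaryTree α → List α
  | nil => []
  | node v l r => l.inorder ++ v :: r.inorder

@[simp]
def postorder : BinaryTree α → List α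
  | nil => []
  | node v l r => l.postorder ++ r.postorder ++ [v]

@[simp]
theorem numNodes_map (f : α → β) (t : BinaryTree α) : (t.map f).numNodes = t.numNodes := by
  induction t with
  | nil => rfl
  | node v l r ihl ihr => simp [map, ihl, ihr]

@[simp]
theorem length_inorder (t : BinaryTree α) : t.inorder.length = t.numNodes := by
  induction t with
  | nil => rfl
  | node v l r ihl ihr => simp [ihl, ihr]; omega

theorem postorder_perm_inorder (t : BinaryTree α) : t.postorder.Perm t.inorder := by
  induction t with
  | nil => rfl
  | node v l r ihl ihr =>
    simpa using ihl.append ((List.perm_append_singleton v _).trans (ihr.cons v))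

theorem eq_of_map_eq_of_inorder_eq {f : α → β} :
    ∀ {t₁ t₂ : BinaryTree α}, t₁.map f = t₂.map f → t₁.inorder = t₂.inorder → t₁ = t₂
  | nil, nil, _, _ => rfl
  | node v₁ l₁ r₁, node v₂ l₂ r₂, hmap, hin => by
    simp only [map, node.injEq] at hmap
    have hlen : l₁.inorder.length = l₂.inorder.length := by
      rw [length_inorder, length_inorder, ← numNodes_map f, hmap.2.1, numNodes_map]
    obtain ⟨hl, hvr⟩ := List.append_inj hin hlen
    obtain ⟨rfl, hr⟩ := List.cons.inj hvr
    rw [eq_of_map_eq_of_inorder_eq hmap.2.1 hl, eq_of_map_eq_of_inorder_eq hmap.2.2 hr]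

section SearchTree

variable [LinearOrder α]

def insert (x : α) : BinaryTree α → BinaryTree α
  | nil => node x nil nil
  | node v l r => if x < v then node v (l.insert x) r else node v l (r.insert x)

def IsBST : BinaryTree α → Prop
  | nil => True
  | node v l r => (∀ a ∈ l.inorder, a < v) ∧ (∀ a ∈ r.inorder, v < a) ∧ l.IsBST ∧ r.IsBST

def ofList (l : List α) : BinaryTree α := l.foldr insert nil

@[simp]
theorem mem_inorder_insert {a x : α} {t : BinaryTree α} :
    a ∈ (t.insert x).inorder ↔ a = x ∨ a ∈ t.inorder := by
  induction t with
  | nil => simp [insert]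
  | node v l r ihl ihr => by_cases h : x < v <;> simp [insert, h, ihl, ihr] <;> tauto

theorem IsBST.insert {t : BinaryTree α} (ht : t.IsBST) {x : α} (hx : x ∉ t.inorder) :
    (t.insert x).IsBST := by
  induction t with
  | nil => simp [BinaryTree.insert, IsBST]
  | node v l r ihl ihr =>
    obtain ⟨hl, hr, bl, br⟩ := ht
    simp only [inorder, List.mem_append, List.mem_cons, not_or] at hx
    by_cases hxv : x < v
    · simp only [BinaryTree.insert, hxv, if_true, IsBST, mem_inorder_insert]
      exact ⟨by rintro a (rfl | ha) <;> [exact hxv; exact hl a ha], hr, ihl bl hx.1, br⟩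
    · have hvx : v < x := lt_of_le_of_ne (not_lt.1 hxv) (Ne.symm hx.2.1)
      simp only [BinaryTree.insert, hxv, if_false, IsBST, mem_inorder_insert]
      exact ⟨hl, by rintro a (rfl | ha) <;> [exact hvx; exact hr a ha], bl, ihr br hx.2.2⟩

theorem IsBST.pairwise_inorder {t : BinaryTree α} (ht : t.IsBST) :
    t.inorder.Pairwise (· < ·) := by
  induction t with
  | nil => simp
  | node v l r ihl ihr =>
    obtain ⟨hl, hr, bl, br⟩ := ht
    refine List.pairwise_append.2 ⟨ihl bl, List.pairwise_cons.2 ⟨hr, ihr br⟩, ?_⟩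
    intro a ha b hb
    rcases List.mem_cons.1 hb with rfl | hb
    · exact hl a ha
    · exact (hl a ha).trans (hr b hb)

/-- Insertions commute once the tree separates the two keys: their search paths then part at
the node holding the separating key, or above it. -/
theorem IsBST.insert_comm {t : BinaryTree α} (ht : t.IsBST) {x y p : α} (hp : p ∈ t.inorder)
    (hxy : x < p ∧ p < y ∨ y < p ∧ p < x) :
    (t.insert y).insert x = (t.insert x).insert y := by
  induction t with
  | nil => simp at hp
  | node v l r ihl ihr =>
    obtain ⟨hl, hr, bl, br⟩ := ht
    simp only [inorder, List.mem_append, List.mem_cons] at hp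
    by_cases hx : x < v <;> by_cases hy : y < v
    · have hpl : p ∈ l.inorder := by
        rcases hp with hp | rfl | hp
        · exact hp
        · rcases hxy with _ | _ <;> order
        · have := hr p hp; rcases hxy with _ | _ <;> order
      simp [BinaryTree.insert, hx, hy, ihl bl hpl]
    · simp [BinaryTree.insert, hx, hy]
    · simp [BinaryTree.insert, hx, hy]
    · have hpr : p ∈ r.inorder := by
        rcases hp with hp | rfl | hp
        · have := hl p hp; rcases hxy with _ | _ <;> order
        · rcases hxy with _ | _ <;> order
        · exact hp
      simp [BinaryTree.insert, hx, hy, ihr br hpr]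

theorem ofList_cons (x : α) (l : List α) : ofList (x :: l) = (ofList l).insert x := rfl

@[simp]
theorem mem_inorder_ofList {a : α} {l : List α} : a ∈ (ofList l).inorder ↔ a ∈ l := by
  induction l with
  | nil => simp [ofList]
  | cons x l ih => simp [ofList_cons, ih]

theorem isBST_ofList {l : List α} (hl : l.Nodup) : (ofList l).IsBST := by
  induction l with
  | nil => trivial
  | cons x l ih =>
    rw [List.nodup_cons] at hl
    exact (ih hl.2).insert (by simpa using hl.1)

theorem ofList_append (l₁ l₂ : List α) : ofList (l₁ ++ l₂) = l₁.foldr insert (ofList l₂) := by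
  simp [ofList]

theorem perm_inorder_ofList {l : List α} (hl : l.Nodup) : (ofList l).inorder.Perm l :=
  (List.perm_ext_iff_of_nodup (isBST_ofList hl).pairwise_inorder.nodup hl).2
    fun _ => mem_inorder_ofList

theorem numNodes_ofList {l : List α} (hl : l.Nodup) : (ofList l).numNodes = l.length := by
  rw [← length_inorder, (perm_inorder_ofList hl).length_eq]

theorem inorder_ofList_eq_of_perm {l₁ l₂ : List α} (hl₁ : l₁.Nodup) (h : l₁.Perm l₂) :
    (ofList l₁).inorder = (ofList l₂).inorder :=
  ((perm_inorder_ofList hl₁).trans (h.trans (perm_inorder_ofList (h.nodup_iff.1 hl₁)).symm))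
    |>.eq_of_pairwise' (isBST_ofList hl₁).pairwise_inorder
      (isBST_ofList (h.nodup_iff.1 hl₁)).pairwise_inorder

theorem foldr_insert_node_of_forall_lt {v : α} {L R : BinaryTree α} {A : List α}
    (hA : ∀ a ∈ A, a < v) : A.foldr insert (node v L R) = node v (A.foldr insert L) R := by
  induction A with
  | nil => rfl
  | cons x A ih =>
    simp only [List.forall_mem_cons] at hA
    simp [ih hA.2, insert, hA.1]

theorem foldr_insert_node_of_forall_gt {v : α} {L R : BinaryTree α} {A : List α}
    (hA : ∀ a ∈ A, v < a) : A.foldr insert (node v L R) = node v L (A.foldr insert R) := by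
  induction A with
  | nil => rfl
  | cons x A ih =>
    simp only [List.forall_mem_cons] at hA
    simp [ih hA.2, insert, not_lt.2 hA.1.le]

theorem IsBST.ofList_postorder {t : BinaryTree α} (ht : t.IsBST) : ofList t.postorder = t := by
  induction t with
  | nil => rfl
  | node v l r ihl ihr =>
    obtain ⟨hl, hr, bl, br⟩ := ht
    have hl' : ∀ a ∈ l.postorder, a < v := fun a ha => hl a ((postorder_perm_inorder l).subset ha)
    have hr' : ∀ a ∈ r.postorder, v < a := fun a ha => hr a ((postorder_perm_inorder r).subset ha)
    rw [postorder, List.append_assoc, ofList_append, ofList_append,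
      show ofList [v] = node v nil nil from rfl, foldr_insert_node_of_forall_gt hr',
      foldr_insert_node_of_forall_lt hl']
    exact congrArg₂ (node v · ·) (ihl bl) (ihr br)

end SearchTree

/-- Numbers the nodes of `s` by `k + 1, …, k + s.numNodes` in inorder. -/
def labelFrom : BinaryTree Unit → ℕ → BinaryTree ℕ
  | nil, _ => nil
  | node _ l r, k => node (k + l.numNodes + 1) (l.labelFrom k) (r.labelFrom (k + l.numNodes + 1))

@[simp]
theorem map_labelFrom (s : BinaryTree Unit) (k : ℕ) : (s.labelFrom k).map (fun _ => ()) = s := by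
  induction s generalizing k with
  | nil => rfl
  | node _ l r ihl ihr => simp [labelFrom, map, ihl, ihr]

theorem mem_inorder_labelFrom {a k : ℕ} {s : BinaryTree Unit} :
    a ∈ (s.labelFrom k).inorder ↔ k < a ∧ a ≤ k + s.numNodes := by
  induction s generalizing k with
  | nil => simp [labelFrom]
  | node _ l r ihl ihr =>
    simp only [labelFrom, inorder, List.mem_append, List.mem_cons, ihl, ihr, numNodes]
    omega

theorem isBST_labelFrom (s : BinaryTree Unit) (k : ℕ) : (s.labelFrom k).IsBST := by
  induction s generalizing k with
  | nil => trivial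
  | node _ l r ihl ihr =>
    refine ⟨fun a ha => ?_, fun a ha => ?_, ihl k, ihr _⟩ <;>
    · rw [mem_inorder_labelFrom] at ha
      omega

end BinaryTree

open BinaryTree Relation

theorem ElemMove.perm {l l' : List ℕ} (h : ElemMove l l') : l.Perm l' := by
  obtain ⟨_, a, b, x, y, rfl, rfl, _⟩ := h
  exact (List.Perm.swap y x b).append_left a

theorem IsoEquiv.perm {l l' : List ℕ} (h : IsoEquiv l l') : l.Perm l' := by
  induction h with
  | rel _ _ h => exact h.perm
  | refl => rfl
  | symm _ _ _ ih => exact ih.symm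
  | trans _ _ _ _ _ ih₁ ih₂ => exact ih₁.trans ih₂

theorem ElemMove.append_append {u u' : List ℕ} (h : ElemMove u u') {c d : List ℕ}
    (hnd : (c ++ u ++ d).Nodup) : ElemMove (c ++ u ++ d) (c ++ u' ++ d) := by
  obtain ⟨_, a, b, x, y, rfl, rfl, p, hp, hxy⟩ := h
  exact ⟨hnd, c ++ a, b ++ d, x, y, by simp, by simp, p, List.mem_append_left d hp, hxy⟩

theorem IsoEquiv.append_append {u u' : List ℕ} (h : IsoEquiv u u') {c d : List ℕ}
    (hnd : (c ++ u ++ d).Nodup) : IsoEquiv (c ++ u ++ d) (c ++ u' ++ d) := by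
  induction h with
  | rel _ _ h => exact .rel _ _ (h.append_append hnd)
  | refl => exact .refl _
  | symm _ _ h ih =>
    exact .symm _ _ (ih ((IsoEquiv.perm h |>.append_left c).append_right d |>.nodup_iff.2 hnd))
  | trans _ _ _ h _ ih₁ ih₂ =>
    exact .trans _ _ _ (ih₁ hnd)
      (ih₂ ((IsoEquiv.perm h |>.append_left c).append_right d |>.nodup_iff.1 hnd))

theorem isoEquiv_cons_append {x : ℕ} {s r : List ℕ} (hnd : (x :: s ++ r).Nodup)
    (hs : ∀ a ∈ s, ∃ p ∈ r, x < p ∧ p < a ∨ a < p ∧ p < x) :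
    IsoEquiv (x :: s ++ r) (s ++ x :: r) := by
  induction s with
  | nil => exact .refl _
  | cons a s ih =>
    simp only [List.forall_mem_cons] at hs
    obtain ⟨p, hp, hxa⟩ := hs.1
    have hmove : ElemMove (x :: a :: s ++ r) (a :: x :: s ++ r) :=
      ⟨hnd, [], s ++ r, x, a, rfl, rfl, p, List.mem_append_right s hp, hxa⟩
    have hnd' : (x :: s ++ r).Nodup := (List.nodup_cons.1 (hmove.perm.nodup_iff.1 hnd)).2
    have hrest : IsoEquiv (a :: x :: s ++ r) (a :: s ++ x :: r) := by
      simpa using (ih hnd' hs.2).append_append (c := [a]) (d := [])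
        (by simpa using hmove.perm.nodup_iff.1 hnd)
    exact EqvGen.trans _ _ _ (EqvGen.rel _ _ hmove) hrest

theorem ElemMove.ofList_eq {l l' : List ℕ} (h : ElemMove l l') : ofList l = ofList l' := by
  obtain ⟨hnd, a, b, x, y, rfl, rfl, p, hp, hxy⟩ := h
  have hb : b.Nodup := (List.nodup_append.1 hnd).2.1.of_cons.of_cons
  rw [ofList_append, ofList_append, ofList_cons, ofList_cons, ofList_cons, ofList_cons,
    (isBST_ofList hb).insert_comm (mem_inorder_ofList.2 hp) hxy]

theorem IsoEquiv.ofList_eq {l l' : List ℕ} (h : IsoEquiv l l') : ofList l = ofList l' := by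
  induction h with
  | rel _ _ h => exact h.ofList_eq
  | refl => rfl
  | symm _ _ _ ih => exact ih.symm
  | trans _ _ _ _ _ ih₁ ih₂ => exact ih₁.trans ih₂

theorem isoEquiv_cons_postorder {t : BinaryTree ℕ} (ht : t.IsBST) {x : ℕ} (hx : x ∉ t.inorder) :
    IsoEquiv (x :: t.postorder) (t.insert x).postorder := by
  induction t with
  | nil => exact .refl _
  | node v l r ihl ihr =>
    have hnd : (x :: (node v l r).postorder).Nodup :=
      ((postorder_perm_inorder _).cons x).nodup_iff.2
        (List.nodup_cons.2 ⟨hx, ht.pairwise_inorder.nodup⟩)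
    obtain ⟨hl, hr, bl, br⟩ := ht
    simp only [inorder, List.mem_append, List.mem_cons, not_or] at hx
    by_cases hxv : x < v
    · simpa [BinaryTree.insert, hxv] using
        (ihl bl hx.1).append_append (c := []) (d := r.postorder ++ [v]) (by simpa using hnd)
    · have hvx : v < x := lt_of_le_of_ne (not_lt.1 hxv) (Ne.symm hx.2.1)
      have hpass : IsoEquiv (x :: l.postorder ++ (r.postorder ++ [v]))
          (l.postorder ++ x :: (r.postorder ++ [v])) :=
        isoEquiv_cons_append (by simpa using hnd) fun a ha =>
          ⟨v, by simp, .inr ⟨hl a ((postorder_perm_inorder l).subset ha), hvx⟩⟩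
      have hright : IsoEquiv (l.postorder ++ x :: (r.postorder ++ [v]))
          (l.postorder ++ ((r.insert x).postorder ++ [v])) := by
        simpa using (ihr br hx.2.2).append_append (c := l.postorder) (d := [v])
          (by simpa using (IsoEquiv.perm hpass).nodup_iff.1 (by simpa using hnd))
      simpa [IsoEquiv, BinaryTree.insert, hxv] using EqvGen.trans _ _ _ hpass hright

theorem isoEquiv_postorder_ofList {l : List ℕ} (hl : l.Nodup) :
    IsoEquiv l (ofList l).postorder := by
  induction l with
  | nil => exact .refl _
  | cons x l ih =>
    rw [List.nodup_cons] at hl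
    have hx : x ∉ (ofList l).inorder := by simpa using hl.1
    have hcons : IsoEquiv (x :: l) (x :: (ofList l).postorder) := by
      simpa using (ih hl.2).append_append (c := [x]) (d := []) (by simpa using hl)
    exact EqvGen.trans _ _ _ hcons (isoEquiv_cons_postorder (isBST_ofList hl.2) hx)

theorem isoEquiv_iff_ofList_eq {l l' : List ℕ} (hl : l.Nodup) (hl' : l'.Nodup) :
    IsoEquiv l l' ↔ ofList l = ofList l' := by
  refine ⟨IsoEquiv.ofList_eq, fun h => ?_⟩
  have h' := isoEquiv_postorder_ofList hl'
  rw [← h] at h'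
  exact EqvGen.trans _ _ _ (isoEquiv_postorder_ofList hl) (EqvGen.symm _ _ h')

theorem PermList.perm {n : ℕ} {l l' : List ℕ} (hl : l ∈ PermList n) (hl' : l' ∈ PermList n) :
    l.Perm l' :=
  (List.perm_ext_iff_of_nodup hl.2.1 hl'.2.1).2 fun x => (hl.2.2 x).trans (hl'.2.2 x).symm

theorem postorder_labelFrom_mem_permList (s : BinaryTree Unit) :
    (s.labelFrom 0).postorder ∈ PermList s.numNodes := by
  have hperm := postorder_perm_inorder (s.labelFrom 0)
  refine ⟨?_, hperm.nodup_iff.2 (isBST_labelFrom s 0).pairwise_inorder.nodup, fun a => ?_⟩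
  · rw [hperm.length_eq, length_inorder, ← numNodes_map (fun _ => ()), map_labelFrom]
  · rw [hperm.mem_iff, mem_inorder_labelFrom, Finset.mem_Icc]
    omega

def classShape (n : ℕ) :
    Quot (fun l l' : PermList n => IsoEquiv l.1 l'.1) → treesOfNumNodesEq n :=
  Quot.lift
    (fun l => ⟨(ofList l.1).map fun _ => (), by
      rw [mem_treesOfNumNodesEq, numNodes_map, numNodes_ofList l.2.2.1, l.2.1]⟩)
    fun _ _ h => Subtype.ext (congrArg (map fun _ => ()) (IsoEquiv.ofList_eq h))

theorem classShape_injective (n : ℕ) : Function.Injective (classShape n) := by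
  rintro ⟨⟨l, hl⟩⟩ ⟨⟨l', hl'⟩⟩ h
  refine Quot.sound ((isoEquiv_iff_ofList_eq hl.2.1 hl'.2.1).2 ?_)
  exact eq_of_map_eq_of_inorder_eq (congrArg Subtype.val h)
    (inorder_ofList_eq_of_perm hl.2.1 (PermList.perm hl hl'))

theorem classShape_surjective (n : ℕ) : Function.Surjective (classShape n) := by
  rintro ⟨s, hs⟩
  rw [mem_treesOfNumNodesEq] at hs
  subst hs
  refine ⟨Quot.mk _ ⟨_, postorder_labelFrom_mem_permList s⟩, Subtype.ext ?_⟩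
  simp [classShape, (isBST_labelFrom s 0).ofList_postorder]

/-- The number of isotopy equivalence classes of permutations of `{1, …, n}` is the
`n`-th Catalan number `C_n = binom(2n, n)/(n+1)`. -/
theorem numClasses_eq_catalan (n : ℕ) :
    Nat.card (Quot (fun l l' : PermList n => IsoEquiv l.1 l'.1))
      = Nat.choose (2 * n) n / (n + 1) := by
  rw [Nat.card_eq_of_bijective _ ⟨classShape_injective n, classShape_surjective n⟩,
    Nat.card_eq_finsetCard, treesOfNumNodesEq_card_eq_catalan, catalan_eq_centralBinom_div,
    Nat.centralBinom_eq_two_mul_choose]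
end

section
/- Work over F₂ = ZMod 2. For all lists a, b over F₂, the (0,0) entry of B(a ++ [1] ++ b) equals the (0,0) entry of B(a⁺ ++ b⁺). In particular, a list is an augmentation vector if and only if its resolution at any entry equal to 1 is an augmentation vector. -/
/-- The matrix `M(a) = [[a,1],[1,0]]` over `F₂ = ZMod 2`. -/
def M (a : ZMod 2) : Matrix (Fin 2) (Fin 2) (ZMod 2) := !![a, 1; 1, 0]

/-- The ordered product `B(ε_1, …, ε_n) = M(ε_1)·M(ε_2)⋯M(ε_n)`. -/
def B (l : List (ZMod 2)) : Matrix (Fin 2) (Fin 2) (ZMod 2) := (l.map M).prod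

/-- A list is an augmentation vector if the `(0,0)` entry of `B(l)` equals `1`. -/
def IsAug (l : List (ZMod 2)) : Prop := B l 0 0 = 1

/-- Add `1` to the first entry of a list (identity on the empty list). -/
def bumpHead : List (ZMod 2) → List (ZMod 2)
  | [] => []
  | x :: xs => (x + 1) :: xs

/-- Add `1` to the last entry of a list (identity on the empty list). -/
def bumpLast (l : List (ZMod 2)) : List (ZMod 2) := (bumpHead l.reverse).reverse

lemma B_append (l1 l2 : List (ZMod 2)) : B (l1 ++ l2) = B l1 * B l2 := by
  simp [B]

lemma B_cons (x : ZMod 2) (l : List (ZMod 2)) : B (x :: l) = M x * B l := by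
  simp [B]

lemma bumpLast_nil : bumpLast [] = [] := rfl

lemma bumpLast_concat (a : List (ZMod 2)) (x : ZMod 2) :
    bumpLast (a ++ [x]) = a ++ [x + 1] := by
  simp [bumpLast, bumpHead]

lemma mid (x y : ZMod 2) : M x * M 1 * M y = M (x + 1) * M (y + 1) := by
  have h2 : (2 : ZMod 2) = 0 := by decide
  ext i j
  fin_cases i <;> fin_cases j <;>
    simp [M, Matrix.mul_apply, Fin.sum_univ_two] <;>
    first | ring1 | linear_combination h2 | linear_combination -h2

lemma col_eq (x : ZMod 2) (j : Fin 2) : (M x * M 1) j 0 = M (x + 1) j 0 := by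
  fin_cases j <;> simp [M, Matrix.mul_apply, Fin.sum_univ_two]

lemma row_eq (y : ZMod 2) (j : Fin 2) : (M 1 * M y) 0 j = M (y + 1) 0 j := by
  fin_cases j <;> simp [M, Matrix.mul_apply, Fin.sum_univ_two, add_comm]


lemma B_nil : B ([] : List (ZMod 2)) = 1 := rfl

lemma B_single (x : ZMod 2) : B [x] = M x := by simp [B]

/-- Resolving an entry equal to `1` preserves the `(0,0)` entry of the total matrix
product: `B(a ++ [1] ++ b)₀₀ = B(a⁺ ++ b⁺)₀₀`. In particular, a list is an
augmentation vector iff its resolution at any entry equal to `1` is. -/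
theorem resolution_preserves_aug (a b : List (ZMod 2)) :
    B (a ++ [1] ++ b) 0 0 = B (bumpLast a ++ bumpHead b) 0 0 ∧
      (IsAug (a ++ [1] ++ b) ↔ IsAug (bumpLast a ++ bumpHead b)) := by
  suffices h : B (a ++ [1] ++ b) 0 0 = B (bumpLast a ++ bumpHead b) 0 0 by
    exact ⟨h, by unfold IsAug; rw [h]⟩
  rcases a.eq_nil_or_concat with rfl | ⟨a', x, rfl⟩
  · cases b with
    | nil => simp [B, M, bumpLast, bumpHead]
    | cons y b' =>
      show B ([1] ++ (y :: b')) 0 0 = B (bumpLast [] ++ bumpHead (y :: b')) 0 0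
      have e : bumpLast [] ++ bumpHead (y :: b') = [y + 1] ++ b' := rfl
      rw [e, B_append, B_append, B_single, B_single]
      have hb : B (y :: b') = M y * B b' := B_cons y b'
      rw [hb, ← mul_assoc, Matrix.mul_apply, Matrix.mul_apply]
      exact Finset.sum_congr rfl fun j _ => by rw [row_eq]
  · simp only [List.concat_eq_append]
    rw [bumpLast_concat]
    cases b with
    | nil =>
      have e1 : a' ++ [x] ++ [1] ++ [] = a' ++ ([x] ++ [1]) := by simp
      have e2 : (a' ++ [x + 1]) ++ bumpHead [] = a' ++ [x + 1] := by simp [bumpHead]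
      rw [e1, e2]
      rw [B_append a' ([x] ++ [1]), B_append a' [x + 1], B_append [x] [1],
        B_single, B_single, B_single, Matrix.mul_apply, Matrix.mul_apply]
      exact Finset.sum_congr rfl fun j _ => by rw [col_eq]
    | cons y b' =>
      have e1 : a' ++ [x] ++ [1] ++ (y :: b') = a' ++ ([x] ++ ([1] ++ ([y] ++ b'))) := by simp
      have e2 : (a' ++ [x + 1]) ++ bumpHead (y :: b') = a' ++ ([x + 1] ++ ([y + 1] ++ b')) := by
        simp [bumpHead]
      rw [e1, e2]
      rw [B_append a', B_append [x], B_append [1], B_append [y],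
        B_append a' ([x + 1] ++ ([y + 1] ++ b')), B_append [x + 1], B_append [y + 1],
        B_single, B_single, B_single, B_single, B_single]
      rw [← mul_assoc (M x) (M 1), ← mul_assoc (M x * M 1) (M y), mid, mul_assoc (M (x + 1))]
end

section
/- Let x, y, z : ℝ² → ℝ, with points of ℝ² written (t, s), where x and z are twice continuously differentiable and y is continuously differentiable. Assume the Legendrian condition ∂z/∂s (t,s) = y(t,s) · ∂x/∂s (t,s) for all (t,s), and define H(t,s) = ∂z/∂t (t,s) − y(t,s) · ∂x/∂t (t,s). Then for all (t,s): (i) e^t · ( ∂(z+H)/∂t (t,s) − y(t,s) · ∂x/∂t (t,s) ) = ∂/∂t ( e^t H(t,s) ), and (ii) e^t · ( ∂(z+H)/∂s (t,s) − y(t,s) · ∂x/∂s (t,s) ) = ∂/∂s ( e^t H(t,s) ). -/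
/- The `t`-component of the pullback is `e^t (z_t − y x_t) + e^t H_t = e^t H + e^t H_t`, which is
`∂_t (e^t H)`; the `s`-component is `e^t (z_s − y x_s) + e^t H_s = e^t H_s` by the Legendrian
condition. -/

open Real

/-- Partial derivative in the first variable `t` of a function on `ℝ²` (points written `(t,s)`). -/
noncomputable def pt (f : ℝ × ℝ → ℝ) (p : ℝ × ℝ) : ℝ := deriv (fun t => f (t, p.2)) p.1

/-- Partial derivative in the second variable `s` of a function on `ℝ²` (points written `(t,s)`). -/
noncomputable def ps (f : ℝ × ℝ → ℝ) (p : ℝ × ℝ) : ℝ := deriv (fun s => f (p.1, s)) p.2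

section PartialDerivatives

variable {f g : ℝ × ℝ → ℝ} {p : ℝ × ℝ}

lemma pt_eq_fderiv (hf : DifferentiableAt ℝ f p) : pt f p = fderiv ℝ f p (1, 0) :=
  (hf.hasFDerivAt.comp_hasDerivAt p.1
    ((hasDerivAt_id p.1).prodMk (hasDerivAt_const p.1 p.2))).deriv

lemma ContDiff.pt {m n : WithTop ℕ∞} (hf : ContDiff ℝ n f) (hmn : m + 1 ≤ n) :
    ContDiff ℝ m (pt f) := by
  have hfd : Differentiable ℝ f := hf.differentiable (by rintro rfl; simp at hmn)
  rw [show _root_.pt f = fun q => fderiv ℝ f q (1, 0) from funext fun q => pt_eq_fderiv (hfd q)]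
  exact (hf.fderiv_right hmn).clm_apply contDiff_const

lemma pt_add (hf : DifferentiableAt ℝ (fun t => f (t, p.2)) p.1)
    (hg : DifferentiableAt ℝ (fun t => g (t, p.2)) p.1) :
    pt (fun q => f q + g q) p = pt f p + pt g p :=
  deriv_add hf hg

lemma ps_add (hf : DifferentiableAt ℝ (fun s => f (p.1, s)) p.2)
    (hg : DifferentiableAt ℝ (fun s => g (p.1, s)) p.2) :
    ps (fun q => f q + g q) p = ps f p + ps g p :=
  deriv_add hf hg

lemma pt_exp_mul (hf : DifferentiableAt ℝ (fun t => f (t, p.2)) p.1) :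
    pt (fun q => exp q.1 * f q) p = exp p.1 * f p + exp p.1 * pt f p :=
  ((hasDerivAt_exp p.1).mul hf.hasDerivAt).deriv

lemma ps_exp_mul : ps (fun q => exp q.1 * f q) p = exp p.1 * ps f p :=
  deriv_const_mul_field (exp p.1)

end PartialDerivatives

/-- For `x, z` C² and `y` C¹ with the Legendrian condition `∂z/∂s = y·∂x/∂s`, and
`H = ∂z/∂t − y·∂x/∂t`, the pullback identities hold:
(i) `e^t·(∂(z+H)/∂t − y·∂x/∂t) = ∂/∂t (e^t H)` and
(ii) `e^t·(∂(z+H)/∂s − y·∂x/∂s) = ∂/∂s (e^t H)`. -/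
theorem deformed_trace_is_exact (x y z : ℝ × ℝ → ℝ)
    (hx : ContDiff ℝ 2 x) (hz : ContDiff ℝ 2 z) (hy : ContDiff ℝ 1 y)
    (hLeg : ∀ p : ℝ × ℝ, ps z p = y p * ps x p) :
    ∀ p : ℝ × ℝ,
      Real.exp p.1 *
          (pt (fun q => z q + (pt z q - y q * pt x q)) p - y p * pt x p)
        = pt (fun q => Real.exp q.1 * (pt z q - y q * pt x q)) p ∧
      Real.exp p.1 *
          (ps (fun q => z q + (pt z q - y q * pt x q)) p - y p * ps x p)
        = ps (fun q => Real.exp q.1 * (pt z q - y q * pt x q)) p := by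
  intro p
  have hzd : Differentiable ℝ z := hz.differentiable (by norm_num)
  have hztd : Differentiable ℝ (pt z) :=
    (hz.pt (m := 1) (by norm_num)).differentiable one_ne_zero
  have hxtd : Differentiable ℝ (pt x) :=
    (hx.pt (m := 1) (by norm_num)).differentiable one_ne_zero
  have hyd : Differentiable ℝ y := hy.differentiable one_ne_zero
  constructor
  · rw [pt_add (by fun_prop) (by fun_prop), pt_exp_mul (by fun_prop)]
    ring
  · rw [ps_add (by fun_prop) (by fun_prop), ps_exp_mul, hLeg p]
    ring
end

section
/- Let α, θ, h₊, h₋, c₀ ∈ ℝ. Define v, w : ℂ → ℂ by v(ζ) = exp(iα + θζ) and w(ζ) = (h₊ − h₋)·ζ + i·h₋ + c₀ + (1/4)·exp(θ(ζ + conj ζ)) − (1/8)·exp(−2iα)·exp(2θ·conj ζ) + (1/8)·exp(2iα)·exp(2θζ). For a real-differentiable f : ℂ → ℂ write ∂̄f(ζ) = (1/2)·(∂₁f(ζ) + i·∂₂f(ζ)), where ∂₁f(ζ) and ∂₂f(ζ) are the directional derivatives of f at ζ in the directions 1 and i respectively. Then for every ζ ∈ ℂ: ∂̄v(ζ) = 0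 and ∂̄w(ζ) = −(1/2) · Im(v(ζ)) · ∂₂(conj ∘ v)(ζ). -/
/-!
Along a line `t ↦ ζ + t • d`, the function `v` and each exponential in `w` is `exp` composed with
a real-affine function of `t`, so the chain rule gives their derivatives in every direction `d`,
and `∂̄` picks out the coefficient of `conj d`. The right-hand side matches because
`Im v = -(i/2)(v - v̄)` and `|e^{iα}| = 1`, so that `e^{θ(ζ+ζ̄)} = v v̄` and
`e^{-2iα} e^{2θζ̄} = v̄²`.
-/

open Complex

/-- The operator `∂̄f(ζ) = (1/2)·(∂₁f(ζ) + i·∂₂f(ζ))`, where `∂₁f(ζ)` and `∂₂f(ζ)` are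
the directional (line) derivatives of `f` at `ζ` in the directions `1` and `i`. -/
noncomputable def dbar (f : ℂ → ℂ) (ζ : ℂ) : ℂ :=
  (1 / 2) * (lineDeriv ℝ f ζ 1 + Complex.I * lineDeriv ℝ f ζ Complex.I)

open scoped ComplexConjugate

section LineDerivCalculus

variable {𝕜 : Type*} [NontriviallyNormedField 𝕜] {E F : Type*} [NormedAddCommGroup E]
  [NormedSpace 𝕜 E] [NormedAddCommGroup F] [NormedSpace 𝕜 F] {f g : E → F} {f' g' : F}
  {x v : E}

theorem hasLineDerivAt_id' : HasLineDerivAt 𝕜 (fun y : E => y) v x v := by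
  simpa [HasLineDerivAt] using ((hasDerivAt_id (0 : 𝕜)).smul_const v).const_add x

theorem HasLineDerivAt.add (hf : HasLineDerivAt 𝕜 f f' x v) (hg : HasLineDerivAt 𝕜 g g' x v) :
    HasLineDerivAt 𝕜 (fun y => f y + g y) (f' + g') x v :=
  HasDerivAt.add hf hg

theorem HasLineDerivAt.sub (hf : HasLineDerivAt 𝕜 f f' x v) (hg : HasLineDerivAt 𝕜 g g' x v) :
    HasLineDerivAt 𝕜 (fun y => f y - g y) (f' - g') x v :=
  HasDerivAt.sub hf hg

theorem HasLineDerivAt.add_const (hf : HasLineDerivAt 𝕜 f f' x v) (c : F) :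
    HasLineDerivAt 𝕜 (fun y => f y + c) f' x v :=
  HasDerivAt.add_const c hf

theorem HasLineDerivAt.const_add (hf : HasLineDerivAt 𝕜 f f' x v) (c : F) :
    HasLineDerivAt 𝕜 (fun y => c + f y) f' x v :=
  HasDerivAt.const_add c hf

theorem HasLineDerivAt.star [StarRing 𝕜] [TrivialStar 𝕜] [StarAddMonoid F] [ContinuousStar F]
    [StarModule 𝕜 F] (hf : HasLineDerivAt 𝕜 f f' x v) :
    HasLineDerivAt 𝕜 (fun y => star (f y)) (star f') x v :=
  HasDerivAt.star hf

variable {𝕜' : Type*} [NontriviallyNormedField 𝕜'] [NormedAlgebra 𝕜 𝕜'] {f : E → 𝕜'} {f' : 𝕜'}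

theorem HasLineDerivAt.const_mul (hf : HasLineDerivAt 𝕜 f f' x v) (c : 𝕜') :
    HasLineDerivAt 𝕜 (fun y => c * f y) (c * f') x v :=
  HasDerivAt.const_mul c hf

theorem HasDerivAt.comp_hasLineDerivAt {g : 𝕜' → 𝕜'} {g' : 𝕜'} (hg : HasDerivAt g g' (f x))
    (hf : HasLineDerivAt 𝕜 f f' x v) :
    HasLineDerivAt 𝕜 (fun y => g (f y)) (g' * f') x v := by
  have hg₀ : HasDerivAt g g' (f (x + (0 : 𝕜) • v)) := by simpa using hg
  exact hg₀.comp 0 hf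

end LineDerivCalculus

theorem dbar_eq_of_hasLineDerivAt {f : ℂ → ℂ} {ζ p q : ℂ} (h₁ : HasLineDerivAt ℝ f p ζ 1)
    (hI : HasLineDerivAt ℝ f q ζ I) : dbar f ζ = (1 / 2) * (p + I * q) := by
  rw [dbar, h₁.lineDeriv, hI.lineDeriv]

theorem Complex.ofReal_im_eq_neg_I_div_two_mul (z : ℂ) :
    (z.im : ℂ) = -(I / 2) * (z - conj z) := by
  rw [im_eq_sub_conj, mul_comm, ← div_div, div_I]
  ring

section ExpIdentities

variable (α θ : ℝ) (ζ : ℂ)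

theorem conj_exp_I_mul_add_mul :
    conj (exp (I * α + θ * ζ)) = exp (-(I * α) + θ * conj ζ) := by
  rw [← exp_conj, map_add, map_mul, map_mul, conj_I, conj_ofReal, conj_ofReal, neg_mul]

theorem exp_I_mul_add_mul_mul_conj :
    exp (I * α + θ * ζ) * conj (exp (I * α + θ * ζ)) = exp (θ * (ζ + conj ζ)) := by
  rw [conj_exp_I_mul_add_mul, ← exp_add]
  ring_nf

theorem conj_exp_I_mul_add_mul_sq :
    conj (exp (I * α + θ * ζ)) ^ 2 = exp (-2 * I * α) * exp (2 * θ * conj ζ) := by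
  rw [conj_exp_I_mul_add_mul, sq, ← exp_add, ← exp_add]
  ring_nf

end ExpIdentities

/-- The explicit truncated local solution near a Reeb chord: with
`v(ζ) = exp(iα + θζ)` and
`w(ζ) = (h₊ − h₋)ζ + i h₋ + c₀ + (1/4) exp(θ(ζ + ζ̄)) − (1/8) exp(−2iα) exp(2θζ̄)
  + (1/8) exp(2iα) exp(2θζ)`,
one has `∂̄v = 0` and `∂̄w(ζ) = −(1/2)·Im(v(ζ))·∂₂(conj ∘ v)(ζ)`. -/
theorem truncated_local_solution (α θ hp hm c₀ : ℝ) :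
    let v : ℂ → ℂ := fun ζ => Complex.exp (Complex.I * (α : ℂ) + (θ : ℂ) * ζ)
    let w : ℂ → ℂ := fun ζ =>
      ((hp : ℂ) - (hm : ℂ)) * ζ + Complex.I * (hm : ℂ) + (c₀ : ℂ)
        + (1 / 4) * Complex.exp ((θ : ℂ) * (ζ + (starRingEnd ℂ) ζ))
        - (1 / 8) * Complex.exp (-2 * Complex.I * (α : ℂ))
            * Complex.exp (2 * (θ : ℂ) * (starRingEnd ℂ) ζ)
        + (1 / 8) * Complex.exp (2 * Complex.I * (α : ℂ))
            * Complex.exp (2 * (θ : ℂ) * ζ)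
    ∀ ζ : ℂ,
      dbar v ζ = 0 ∧
      dbar w ζ = -(1 / 2) * ((v ζ).im : ℂ)
          * lineDeriv ℝ (fun s => (starRingEnd ℂ) (v s)) ζ Complex.I := by
  intro v w ζ
  have hz : ∀ d : ℂ, HasLineDerivAt ℝ (fun z : ℂ => z) d ζ d := fun d => hasLineDerivAt_id'
  have hv : ∀ d, HasLineDerivAt ℝ v (v ζ * (θ * d)) ζ d := fun d =>
    (hasDerivAt_exp _).comp_hasLineDerivAt (((hz d).const_mul _).const_add _)
  have hw : ∀ d, HasLineDerivAt ℝ w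
      ((hp - hm) * d + 1 / 4 * (exp (θ * (ζ + conj ζ)) * (θ * (d + conj d)))
        - 1 / 8 * exp (-2 * I * α) * (exp (2 * θ * conj ζ) * (2 * θ * conj d))
        + 1 / 8 * exp (2 * I * α) * (exp (2 * θ * ζ) * (2 * θ * d))) ζ d := fun d =>
    (((((hz d).const_mul _).add_const _).add_const _).add
      (((hasDerivAt_exp _).comp_hasLineDerivAt (((hz d).add (hz d).star).const_mul _)).const_mul _)
      |>.sub (((hasDerivAt_exp _).comp_hasLineDerivAt ((hz d).star.const_mul _)).const_mul _)).add
      (((hasDerivAt_exp _).comp_hasLineDerivAt ((hz d).const_mul _)).const_mul _)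
  have hv_conj : HasLineDerivAt ℝ (fun s => conj (v s)) (conj (v ζ * (θ * I))) ζ I := (hv I).star
  have hmul_conj : v ζ * conj (v ζ) = _ := exp_I_mul_add_mul_mul_conj α θ ζ
  have hconj_sq : conj (v ζ) ^ 2 = _ := conj_exp_I_mul_add_mul_sq α θ ζ
  refine ⟨?_, ?_⟩
  · rw [dbar_eq_of_hasLineDerivAt (hv 1) (hv I)]
    linear_combination (1 / 2) * v ζ * θ * I_sq
  · rw [dbar_eq_of_hasLineDerivAt (hw 1) (hw I), hv_conj.lineDeriv,
      ofReal_im_eq_neg_I_div_two_mul]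
    simp only [map_one, conj_I, map_mul, conj_ofReal]
    -- once `I ^ 2 = -1`, both sides are `θ v̄ (v - v̄) / 4`
    linear_combination (1 / 2 * (hp - hm) + θ / 8 * exp (-2 * I * α) * exp (2 * θ * conj ζ)
      + θ / 8 * exp (2 * I * α) * exp (2 * θ * ζ) + θ / 4 * (v ζ * conj (v ζ) - conj (v ζ) ^ 2))
      * I_sq - θ / 4 * hmul_conj + θ / 4 * hconj_sq
end

section
/- Let k, b, y ∈ ℝ with k > 0, 0 ≤ b ≤ 1 and |y| ≤ 1, and let (a₁, a₂, a₃, a₄) ∈ ℝ⁴ be nonzero. Then a₁²·k⁻¹ + a₁a₄·k⁻¹·b·y + a₂²·k + a₂a₃·k·b·y + a₃²·k + a₂a₃·k·y + a₃²·k·b·y² + a₄²·k⁻¹ − a₁a₄·k⁻¹·y > 0. -/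
set_option maxHeartbeats 800000

/-- Taming inequality: for `k > 0`, `0 ≤ b ≤ 1`, `|y| ≤ 1` and `(a₁,a₂,a₃,a₄) ≠ 0`,
the quadratic expression `e^{−t}·ω(ξ, J_{δ;σ}ξ)` is strictly positive. -/
theorem taming_inequality (k b y : ℝ) (hk : 0 < k) (hb0 : 0 ≤ b) (hb1 : b ≤ 1)
    (hy : |y| ≤ 1) (a₁ a₂ a₃ a₄ : ℝ) (ha : (a₁, a₂, a₃, a₄) ≠ (0, 0, 0, 0)) :
    0 < a₁ ^ 2 * k⁻¹ + a₁ * a₄ * k⁻¹ * b * y + a₂ ^ 2 * k + a₂ * a₃ * k * b * y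
        + a₃ ^ 2 * k + a₂ * a₃ * k * y + a₃ ^ 2 * k * b * y ^ 2 + a₄ ^ 2 * k⁻¹
        - a₁ * a₄ * k⁻¹ * y := by
  have hy1 : -1 ≤ y := (abs_le.mp hy).1
  have hy2 : y ≤ 1 := (abs_le.mp hy).2
  have hky : y ^ 2 ≤ 1 := by nlinarith
  have hkinv : 0 < k⁻¹ := inv_pos.mpr hk
  have hc1 : 0 ≤ 1 + (b * y - y) := by nlinarith
  have hc2 : 0 ≤ 1 - (b * y - y) := by nlinarith
  have key1 : a₁ ^ 2 + a₁ * a₄ * (b * y - y) + a₄ ^ 2 ≥ (1/2) * (a₁ ^ 2 + a₄ ^ 2) := by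
    nlinarith [mul_nonneg hc1 (sq_nonneg (a₁ + a₄)), mul_nonneg hc2 (sq_nonneg (a₁ - a₄))]
  have hd : 4 * ((b + 1) * y) ^ 2 ≤ 9 + 12 * b * y ^ 2 := by nlinarith
  have key2 : a₂ ^ 2 + a₂ * a₃ * (b * y + y) + a₃ ^ 2 + a₃ ^ 2 * b * y ^ 2
      ≥ (1/4) * (a₂ ^ 2 + a₃ ^ 2) := by
    nlinarith [sq_nonneg (3 * a₂ + 2 * (b + 1) * y * a₃),
      mul_nonneg (by linarith : (0:ℝ) ≤ 9 + 12 * b * y ^ 2 - 4 * ((b + 1) * y) ^ 2) (sq_nonneg a₃)]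
  have h1 : a₁ ^ 2 * k⁻¹ + a₁ * a₄ * k⁻¹ * b * y + a₄ ^ 2 * k⁻¹ - a₁ * a₄ * k⁻¹ * y
      ≥ (1/2) * k⁻¹ * (a₁ ^ 2 + a₄ ^ 2) := by
    have := mul_le_mul_of_nonneg_left key1 hkinv.le
    nlinarith [this]
  have h2 : a₂ ^ 2 * k + a₂ * a₃ * k * b * y + a₃ ^ 2 * k + a₂ * a₃ * k * y
      + a₃ ^ 2 * k * b * y ^ 2 ≥ (1/4) * k * (a₂ ^ 2 + a₃ ^ 2) := by
    have := mul_le_mul_of_nonneg_left key2 hk.le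
    nlinarith [this]
  have hpos : 0 < (1/2) * k⁻¹ * (a₁ ^ 2 + a₄ ^ 2) + (1/4) * k * (a₂ ^ 2 + a₃ ^ 2) := by
    rcases lt_or_ge 0 (a₁ ^ 2 + a₄ ^ 2) with h | h
    · have h2' : 0 ≤ (1/4) * k * (a₂ ^ 2 + a₃ ^ 2) := by positivity
      nlinarith [mul_pos hkinv h]
    · have ha1 : a₁ = 0 := by
        have h0 : a₁ ^ 2 = 0 := le_antisymm (by linarith [sq_nonneg a₄]) (sq_nonneg a₁)
        exact sq_eq_zero_iff.mp h0
      have ha4 : a₄ = 0 := by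
        have h0 : a₄ ^ 2 = 0 := le_antisymm (by linarith [sq_nonneg a₁]) (sq_nonneg a₄)
        exact sq_eq_zero_iff.mp h0
      have h23 : 0 < a₂ ^ 2 + a₃ ^ 2 := by
        rcases eq_or_ne a₂ 0 with h2' | h2'
        · rcases eq_or_ne a₃ 0 with h3' | h3'
          · exact absurd (by simp [ha1, ha4, h2', h3']) ha
          · positivity
        · positivity
      nlinarith [mul_pos hk h23, mul_nonneg hkinv.le (add_nonneg (sq_nonneg a₁) (sq_nonneg a₄))]
  linarith
end
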